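/- Let p, r be nonzero quaternions and h a quaternion satisfying h*r + r*conj(p*h*p⁻¹) = 0. Then Re(h) = 0 and h commutes with r*p, i.e. h*(r*p) = (r*p)*h. -/

import Mathlib

open scoped Quaternion

/-!
Multiplying the hypothesis on the right by `p` turns it into `h s + s h̄ = 0` with `s = r p`,
because `conj (p h p⁻¹) p = p h̄`. Multiplying this on the left by `s̄` and taking real parts,
with `Re (x y) = Re (y x)`, gives `2 |s|² Re h = 0`. Hence `h̄ = -h`, and the equation becomes
`h s = s h`.
-/

namespace Quaternion

variable {R : Type*}

theorem re_mul_comm [CommRing R] (a b : ℍ[R]) : (a * b).re = (b * a).re := by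
  simp only [re_mul]; ring

variable [Field R] [LinearOrder R] [IsStrictOrderedRing R]

theorem star_conj_mul_self {p : ℍ[R]} (hp : p ≠ 0) (h : ℍ[R]) :
    star (p * h * p⁻¹) * p = p * star h := by
  have hsp : star p ≠ 0 := star_ne_zero.mpr hp
  calc star (p * h * p⁻¹) * p = (star p)⁻¹ * star h * (star p * p) := by
        simp only [star_mul, star_inv₀, mul_assoc]
    _ = (star p)⁻¹ * (star p * p) * star h := by
        rw [star_mul_self, mul_assoc, mul_assoc, (coe_commute _ _).eq]
    _ = p * star h := by rw [← mul_assoc, inv_mul_cancel₀ hsp, one_mul]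

theorem re_eq_zero_of_mul_add_mul_star_eq_zero {h s : ℍ[R]} (hs : s ≠ 0)
    (H : h * s + s * star h = 0) : h.re = 0 := by
  have expand : star s * (h * s + s * star h) = star s * h * s + normSq s * star h := by
    rw [mul_add, ← mul_assoc, ← mul_assoc, star_mul_self]
  have twice : (star s * h * s).re + (normSq s * star h).re = 0 := by
    rw [← re_add, ← expand, H, mul_zero, re_zero]
  rw [re_mul_comm (star s * h) s, ← mul_assoc, self_mul_star, coe_mul_eq_smul, coe_mul_eq_smul,
    re_smul, re_smul, re_star, smul_eq_mul] at twice
  have : normSq s * h.re = 0 := by linear_combination twice / 2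
  exact (mul_eq_zero.mp this).resolve_left (normSq_ne_zero.mpr hs)

theorem commute_of_mul_add_mul_star_eq_zero {h s : ℍ[R]} (hre : h.re = 0)
    (H : h * s + s * star h = 0) : Commute h s := by
  rw [star_eq_neg.mpr hre, mul_neg, ← sub_eq_add_neg, sub_eq_zero] at H
  exact H

end Quaternion

/-- If `h*r + r * conj (p*h*p⁻¹) = 0` with `p, r ≠ 0`, then `Re h = 0` and
`h` commutes with `r*p`. -/
theorem re_zero_and_commutes (p r h : ℍ[ℝ]) (hp : p ≠ 0) (hr : r ≠ 0)
    (hyp : h * r + r * star (p * h * p⁻¹) = 0) :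
    h.re = 0 ∧ h * (r * p) = (r * p) * h := by
  have H : h * (r * p) + (r * p) * star h = 0 := by
    rw [mul_assoc r, ← Quaternion.star_conj_mul_self hp, ← mul_assoc, ← mul_assoc,
      ← add_mul, hyp, zero_mul]
  have hre := Quaternion.re_eq_zero_of_mul_add_mul_star_eq_zero (mul_ne_zero hr hp) H
  exact ⟨hre, Quaternion.commute_of_mul_add_mul_star_eq_zero hre H⟩
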